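/- (Corollary 6.11) Let ξ = exp(iπ/5) ∈ ℂ, τ = (1+√5)/2 and τ' = 1 - τ. For every integer n ≥ 3, there do not exist a bounded interval Ω ⊆ ℝ and a bounded interval I ⊆ ℝ such that L(n) = {p + qτ : p, q ∈ ℤ, p + qτ' ∈ Ω} ∩ I. That is, L(n) does not correspond to (a fragment of) a cut-and-project quasicrystal with connected acceptance window for n ≥ 3. -/

import Mathlib

/-!
Both `n` and `-n` lie in `L(n)` and have conjugate `±n`, so a convex window and a convex `I`
would contain `[-n, n]`. Since `2 Re ξʲ ∈ ℤ + {-1, 0, 1} τ`, every `p + q τ ∈ L(n)` has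
`|2q| ≤ n`; but for `n ≥ 3` there is a `p + q τ` with `2q > n` whose two conjugates both lie
in `[-n, n]`.
-/

noncomputable def tau : ℝ := (1 + Real.sqrt 5) / 2

noncomputable def tau' : ℝ := 1 - tau

/-- ξ = exp(iπ/5), a primitive 10th root of unity. -/
noncomputable def xi : ℂ := Complex.exp (Real.pi * Complex.I / 5)

/-- L(n): the real points of the quasicrystal fragment Q₂(n). -/
noncomputable def L (n : ℕ) : Set ℝ :=
  {x : ℝ | ∃ m : Fin 10 → ℕ, (∑ j, m j) ≤ n ∧ (x : ℂ) = ∑ j, (m j : ℂ) * xi ^ (j : ℕ)}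

open Real goldenRatio Set

lemma tau_eq_goldenRatio : tau = φ := rfl

lemma tau'_eq_goldenConj : tau' = ψ := one_sub_goldenConj

lemma intCast_add_intCast_mul_goldenRatio_inj {p q p' q' : ℤ}
    (h : (p + q * φ : ℝ) = p' + q' * φ) : p = p' ∧ q = q' := by
  by_cases hq : q = q'
  · subst hq
    exact ⟨by exact_mod_cast add_right_cancel h, rfl⟩
  · have hirr : Irrational (((q - q' : ℤ) : ℝ) * φ) :=
      goldenRatio_irrational.intCast_mul (sub_ne_zero.mpr hq)
    exact absurd (by push_cast; linarith) (hirr.ne_int (p' - p))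

lemma two_mul_cos_pi_div_five : 2 * cos (π / 5) = φ := by
  rw [cos_pi_div_five]; ring

lemma two_mul_cos_two_mul_pi_div_five : 2 * cos (2 * π / 5) = φ - 1 := by
  rw [show 2 * π / 5 = 2 * (π / 5) by ring, cos_two_mul]
  nlinarith [two_mul_cos_pi_div_five, goldenRatio_sq]

lemma exists_two_mul_cos_mul_pi_div_five {r : ℕ} (hr : r < 5) :
    ∃ c d : ℤ, |d| ≤ 1 ∧ 2 * cos (r * π / 5) = c + d * φ := by
  interval_cases r
  · exact ⟨2, 0, by norm_num, by simp⟩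
  · exact ⟨0, 1, by norm_num, by simpa using two_mul_cos_pi_div_five⟩
  · exact ⟨-1, 1, by norm_num, by push_cast; linarith [two_mul_cos_two_mul_pi_div_five]⟩
  · refine ⟨1, -1, by norm_num, ?_⟩
    rw [show ((3 : ℕ) : ℝ) * π / 5 = π - 2 * π / 5 by push_cast; ring, cos_pi_sub]
    push_cast; linarith [two_mul_cos_two_mul_pi_div_five]
  · refine ⟨0, -1, by norm_num, ?_⟩
    rw [show ((4 : ℕ) : ℝ) * π / 5 = π - π / 5 by push_cast; ring, cos_pi_sub]
    push_cast; linarith [two_mul_cos_pi_div_five]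

lemma xi_pow_five : xi ^ 5 = -1 := by
  rw [xi, ← Complex.exp_nat_mul, show ((5 : ℕ) : ℂ) * (π * Complex.I / 5) = π * Complex.I by
    push_cast; ring]
  exact Complex.exp_pi_mul_I

lemma re_xi_pow (j : ℕ) : (xi ^ j).re = cos (j * π / 5) := by
  have harg : (j : ℂ) * (π * Complex.I / 5) = ((j * π / 5 : ℝ) : ℂ) * Complex.I := by
    push_cast; ring
  rw [xi, ← Complex.exp_nat_mul, harg, Complex.exp_ofReal_mul_I_re]

lemma exists_two_mul_re_xi_pow (j : ℕ) :
    ∃ c d : ℤ, |d| ≤ 1 ∧ 2 * (xi ^ j).re = c + d * φ := by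
  obtain ⟨c, d, hd, hcd⟩ := exists_two_mul_cos_mul_pi_div_five (j.mod_lt (by norm_num))
  rw [← re_xi_pow] at hcd
  rw [← Nat.div_add_mod j 5, pow_add, pow_mul, xi_pow_five]
  rcases neg_one_pow_eq_or ℂ (j / 5) with h | h <;> rw [h]
  · exact ⟨c, d, hd, by simpa using hcd⟩
  · refine ⟨-c, -d, by rwa [abs_neg], ?_⟩
    simp only [neg_one_mul, Complex.neg_re]
    push_cast
    linarith

lemma exists_two_mul_eq_of_mem_L {n : ℕ} {x : ℝ} (hx : x ∈ L n) :
    ∃ P Q : ℤ, |Q| ≤ n ∧ 2 * x = P + Q * φ := by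
  obtain ⟨m, hm, hx⟩ := hx
  choose c d hd hcd using fun j : Fin 10 => exists_two_mul_re_xi_pow j
  refine ⟨∑ j, m j * c j, ∑ j, m j * d j, ?_, ?_⟩
  · calc |∑ j, (m j : ℤ) * d j| ≤ ∑ j, |(m j : ℤ) * d j| := Finset.abs_sum_le_sum_abs _ _
      _ ≤ ∑ j, (m j : ℤ) := Finset.sum_le_sum fun j _ => by
          rw [abs_mul, abs_of_nonneg (Nat.cast_nonneg _)]
          exact mul_le_of_le_one_right (Nat.cast_nonneg _) (hd j)
      _ ≤ n := by exact_mod_cast hm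
  · have hre : x = ∑ j, (m j : ℝ) * (xi ^ (j : ℕ)).re := by
      simpa [Complex.re_sum] using congrArg Complex.re hx
    rw [hre, Finset.mul_sum]
    push_cast
    rw [Finset.sum_mul, ← Finset.sum_add_distrib]
    refine Finset.sum_congr rfl fun j _ => ?_
    linear_combination (m j : ℝ) * hcd j

lemma abs_two_mul_le_of_mem_L {n : ℕ} {p q : ℤ} (h : (p + q * φ : ℝ) ∈ L n) :
    |2 * q| ≤ n := by
  obtain ⟨P, Q, hQ, hPQ⟩ := exists_two_mul_eq_of_mem_L h
  obtain ⟨-, rfl⟩ := intCast_add_intCast_mul_goldenRatio_inj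
    (show ((2 * p : ℤ) : ℝ) + (2 * q : ℤ) * φ = P + Q * φ by push_cast; linarith)
  exact hQ

lemma mem_L_of_eq_natCast_mul_xi_pow {n : ℕ} {x : ℝ} (j : Fin 10)
    (hx : (x : ℂ) = n * xi ^ (j : ℕ)) : x ∈ L n := by
  refine ⟨Pi.single j n, by simp [Finset.sum_pi_single'], ?_⟩
  rw [hx, Finset.sum_eq_single j (fun i _ hi => by simp [hi]) (by simp)]
  simp

/-- The cut-and-project set `Σ(Ω)`. -/
def cutAndProject (Ω : Set ℝ) : Set ℝ :=
  {x | ∃ p q : ℤ, x = p + q * tau ∧ (p : ℝ) + q * tau' ∈ Ω}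

lemma mem_of_intCast_mem_cutAndProject {Ω : Set ℝ} {k : ℤ}
    (h : (k : ℝ) ∈ cutAndProject Ω) : (k : ℝ) ∈ Ω := by
  obtain ⟨p, q, hk, hΩ⟩ := h
  obtain ⟨rfl, rfl⟩ := intCast_add_intCast_mul_goldenRatio_inj
    (show (p : ℝ) + q * φ = k + (0 : ℤ) * φ by rw [← tau_eq_goldenRatio, ← hk]; simp)
  simpa using hΩ

lemma exists_two_mul_gt_with_conj_mem_Icc {n : ℕ} (hn : 3 ≤ n) :
    ∃ p q : ℤ, (n : ℤ) < 2 * q ∧ (p + q * φ : ℝ) ∈ Icc (-n : ℝ) n ∧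
      (p + q * ψ : ℝ) ∈ Icc (-n : ℝ) n := by
  -- `q = ⌊n/2⌋ + 1` and `p = -⌈q/2⌉`, so that `2p + q ∈ {-1, 0}` and `q √5 ≤ 2n - 1`.
  set q : ℤ := n / 2 + 1
  set p : ℤ := -((q + 1) / 2)
  have hsq : 5 * q ^ 2 ≤ (2 * (n : ℤ) - 1) ^ 2 := by
    rcases (by omega : 2 * q = n + 1 ∨ (2 * q = n + 2 ∧ 4 ≤ (n : ℤ))) with h | ⟨h, h4⟩ <;>
      nlinarith
  have hs : (2 * p + q : ℝ) ∈ Icc (-1) 0 := by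
    constructor <;> exact_mod_cast (by omega : _)
  have hsqrt : 0 ≤ q * √5 ∧ q * √5 ≤ 2 * n - 1 := by
    have h5 : √5 ^ 2 = 5 := sq_sqrt (by norm_num)
    have hsqR : 5 * (q : ℝ) ^ 2 ≤ (2 * n - 1) ^ 2 := by exact_mod_cast hsq
    have hnR : (3 : ℝ) ≤ n := by exact_mod_cast hn
    exact ⟨by positivity, by nlinarith [sqrt_nonneg 5]⟩
  refine ⟨p, q, by omega, ?_, ?_⟩ <;>
    simp only [goldenRatio, goldenConj, mem_Icc] at hs ⊢ <;> constructor <;> nlinarith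

/-- Corollary 6.11: for n ≥ 3, L(n) is not the intersection of a cut-and-project
quasicrystal with connected (i.e. convex) bounded acceptance window with a bounded
interval. -/
theorem L_not_cut_and_project (n : ℕ) (hn : 3 ≤ n) :
    ¬ ∃ Ω I : Set ℝ, Bornology.IsBounded Ω ∧ Convex ℝ Ω ∧
      Bornology.IsBounded I ∧ Convex ℝ I ∧
      L n = {x : ℝ | ∃ p q : ℤ, x = (p : ℝ) + (q : ℝ) * tau ∧
        (p : ℝ) + (q : ℝ) * tau' ∈ Ω} ∩ I := by
  rintro ⟨Ω, I, -, hΩ, -, hI, hL⟩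
  change L n = cutAndProject Ω ∩ I at hL
  have hpos : ((n : ℤ) : ℝ) ∈ cutAndProject Ω ∩ I :=
    hL ▸ mem_L_of_eq_natCast_mul_xi_pow 0 (by simp)
  have hneg : ((-n : ℤ) : ℝ) ∈ cutAndProject Ω ∩ I :=
    hL ▸ mem_L_of_eq_natCast_mul_xi_pow 5 (by simp [xi_pow_five])
  have hΩ' := hΩ.ordConnected.out (mem_of_intCast_mem_cutAndProject hneg.1)
    (mem_of_intCast_mem_cutAndProject hpos.1)
  have hI' := hI.ordConnected.out hneg.2 hpos.2
  push_cast at hΩ' hI'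
  obtain ⟨p, q, hq, hz, hz'⟩ := exists_two_mul_gt_with_conj_mem_Icc hn
  have hmem : (p + q * φ : ℝ) ∈ L n :=
    hL ▸ ⟨⟨p, q, rfl, by rw [tau'_eq_goldenConj]; exact hΩ' hz'⟩, hI' hz⟩
  have := (le_abs_self _).trans (abs_two_mul_le_of_mem_L hmem)
  omega
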